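/- Let n ≥ 2, p > 1 and -1 < a < p-1. There exists θ ∈ (0,1), depending only on n, p and a, with the following property: for every x0 ∈ R^n, every r > 0, with z0 = (x0, 0) ∈ R^{n+1} and B = B(z0, 3r), and every bounded μ_a-measurable function V on B that vanishes μ_a-almost everywhere on the set {(x,t) ∈ B : |x - x0| ≥ 2r + |t|}, one has |μ_a(B)^{-1} ∫_B V dμ_a| ≤ θ · (μ_a(B)^{-1} ∫_B |V|^p dμ_a)^{1/p}. -/

import Mathlib

open MeasureTheory Metric ENNReal

noncomputable section

abbrev En (n : ℕ) := EuclideanSpace ℝ (Fin n)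

/-- The `p`-th power of the Besov `B^s_p` seminorm of `v : ℝⁿ → ℝ`. -/
def besovEnergy (n : ℕ) (p s : ℝ) (v : En n → ℝ) : ℝ≥0∞ :=
  ∫⁻ x, ∫⁻ y, ENNReal.ofReal (|v x - v y| ^ p / ‖x - y‖ ^ ((n : ℝ) + s * p))

/-- `v ∈ C_0^∞(B)`. -/
def IsTestOn {E : Type*} [NormedAddCommGroup E] [NormedSpace ℝ E]
    (B : Set E) (v : E → ℝ) : Prop :=
  ContDiff ℝ (⊤ : ℕ∞) v ∧ HasCompactSupport v ∧ tsupport v ⊆ B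

/-- Variational Besov capacity of a compact set `K` with respect to a ball `B`. -/
def besovCapK (n : ℕ) (p s : ℝ) (K B : Set (En n)) : ℝ≥0∞ :=
  ⨅ (v : En n → ℝ) (_ : IsTestOn B v) (_ : ∀ x ∈ K, 1 ≤ v x), besovEnergy n p s v

/-- Variational Besov capacity of a Borel set: sup over compact subsets. -/
def besovCap (n : ℕ) (p s : ℝ) (E B : Set (En n)) : ℝ≥0∞ :=
  ⨆ (K : Set (En n)) (_ : IsCompact K) (_ : K ⊆ E), besovCapK n p s K B

/-- The weighted measure `dμ_a = |t|^a dx dt` on `ℝ^{n+1}`. -/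
def muW (n : ℕ) (a : ℝ) : Measure (En (n + 1)) :=
  volume.withDensity fun z => ENNReal.ofReal (|z (Fin.last n)| ^ a)

/-- The weighted energy `∫_B |∇v|^p dμ_a`. -/
def wEnergy (n : ℕ) (p a : ℝ) (B : Set (En (n + 1))) (v : En (n + 1) → ℝ) : ℝ≥0∞ :=
  ∫⁻ z in B, ENNReal.ofReal (‖fderiv ℝ v z‖ ^ p) ∂(muW n a)

/-- Weighted variational capacity of a compact set `K` with respect to a ball `B`. -/
def wCapK (n : ℕ) (p a : ℝ) (K B : Set (En (n + 1))) : ℝ≥0∞ :=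
  ⨅ (v : En (n + 1) → ℝ) (_ : IsTestOn B v) (_ : ∀ z ∈ K, 1 ≤ v z), wEnergy n p a B v

/-- Weighted variational capacity of a Borel set: sup over compact subsets. -/
def wCap (n : ℕ) (p a : ℝ) (E B : Set (En (n + 1))) : ℝ≥0∞ :=
  ⨆ (K : Set (En (n + 1))) (_ : IsCompact K) (_ : K ⊆ E), wCapK n p a K B

/-- The point `(x, t) ∈ ℝⁿ × ℝ = ℝ^{n+1}`. -/
def up (n : ℕ) (x : En n) (t : ℝ) : En (n + 1) :=
  (EuclideanSpace.equiv (Fin (n + 1)) ℝ).symm (Fin.snoc ((EuclideanSpace.equiv (Fin n) ℝ) x) t)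

/-- The projection `ℝ^{n+1} = ℝⁿ × ℝ → ℝⁿ`. -/
def down (n : ℕ) (z : En (n + 1)) : En n :=
  (EuclideanSpace.equiv (Fin n) ℝ).symm (fun i => z i.castSucc)

open Set

namespace Avg

def EuclideanSpace.measurableEquiv (ι : Type*) [Fintype ι] : EuclideanSpace ℝ ι ≃ᵐ (ι → ℝ) :=
  (MeasurableEquiv.toLp 2 (ι → ℝ)).symm

def psiE (n : ℕ) : En (n+1) ≃ᵐ ℝ × (Fin n → ℝ) :=
  (EuclideanSpace.measurableEquiv (Fin (n+1))).trans
    (MeasurableEquiv.piFinSuccAbove (fun _ => ℝ) (Fin.last n))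

lemma psiE_mp (n : ℕ) : MeasurePreserving (psiE n) volume volume :=
  (EuclideanSpace.volume_preserving_symm_measurableEquiv_toLp (Fin (n+1))).trans
    (volume_preserving_piFinSuccAbove (fun _ => ℝ) (Fin.last n))

lemma psiE_fst (n : ℕ) (z : En (n+1)) : (psiE n z).1 = z (Fin.last n) := rfl

lemma psiE_snd (n : ℕ) (z : En (n+1)) :
    ((EuclideanSpace.measurableEquiv (Fin n)).symm (psiE n z).2) = down n z := by
  ext j
  show z (Fin.succAbove (Fin.last n) j) = z j.castSucc
  rw [Fin.succAbove_last]

def cylSet (n : ℕ) (I : Set ℝ) (S : Set (En n)) : Set (En (n+1)) :=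
  psiE n ⁻¹' (I ×ˢ ((EuclideanSpace.measurableEquiv (Fin n)).symm ⁻¹' S))

lemma mem_cylSet {n : ℕ} {I : Set ℝ} {S : Set (En n)} {z : En (n+1)} :
    z ∈ cylSet n I S ↔ z (Fin.last n) ∈ I ∧ down n z ∈ S := by
  rw [cylSet, Set.mem_preimage, Set.mem_prod, Set.mem_preimage, psiE_fst, psiE_snd]

lemma measurableSet_cylSet {n : ℕ} {I : Set ℝ} {S : Set (En n)}
    (hI : MeasurableSet I) (hS : MeasurableSet S) : MeasurableSet (cylSet n I S) :=
  (psiE n).measurable (hI.prod (hS.preimage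
    (EuclideanSpace.measurableEquiv (Fin n)).symm.measurable))

lemma prod_lintegral {n : ℕ} (g : ℝ → ℝ≥0∞) (hg : Measurable g) {I : Set ℝ}
    (hI : MeasurableSet I) {T : Set (Fin n → ℝ)} (hT : MeasurableSet T) :
    ∫⁻ q in I ×ˢ T, g q.1 ∂(volume : Measure (ℝ × (Fin n → ℝ))) =
      (∫⁻ t in I, g t) * volume T := by
  rw [← lintegral_indicator (hI.prod hT)]
  have : (I ×ˢ T).indicator (fun q : ℝ × (Fin n → ℝ) => g q.1)
      = fun q => I.indicator g q.1 * T.indicator 1 q.2 := by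
    funext q
    by_cases h1 : q.1 ∈ I <;> by_cases h2 : q.2 ∈ T <;>
      simp [Set.indicator, h1, h2, Set.mem_prod]
  rw [this, Measure.volume_eq_prod, lintegral_prod_mul (hg.indicator hI).aemeasurable
    (measurable_one.indicator hT).aemeasurable,
    lintegral_indicator hI, lintegral_indicator hT]
  simp

lemma measurable_weight (a : ℝ) : Measurable fun t : ℝ => ENNReal.ofReal (|t| ^ a) := by
  fun_prop

lemma muW_cylSet (n : ℕ) (a : ℝ) {I : Set ℝ} {S : Set (En n)}
    (hI : MeasurableSet I) (hS : MeasurableSet S) :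
    muW n a (cylSet n I S) = (∫⁻ t in I, ENNReal.ofReal (|t| ^ a)) * volume S := by
  have hT : MeasurableSet ((EuclideanSpace.measurableEquiv (Fin n)).symm ⁻¹' S) :=
    hS.preimage (EuclideanSpace.measurableEquiv (Fin n)).symm.measurable
  rw [muW, withDensity_apply _ (measurableSet_cylSet hI hS)]
  have h1 : ∫⁻ z in cylSet n I S, ENNReal.ofReal (|z (Fin.last n)| ^ a) ∂volume
      = ∫⁻ q in I ×ˢ ((EuclideanSpace.measurableEquiv (Fin n)).symm ⁻¹' S),
          ENNReal.ofReal (|q.1| ^ a) ∂volume := by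
    have := (psiE_mp n).setLIntegral_comp_preimage_emb (psiE n).measurableEmbedding
      (fun q : ℝ × (Fin n → ℝ) => ENNReal.ofReal (|q.1| ^ a))
      (I ×ˢ ((EuclideanSpace.measurableEquiv (Fin n)).symm ⁻¹' S))
    simpa [cylSet, psiE_fst] using this
  rw [h1, prod_lintegral _ (measurable_weight a) hI hT]
  congr 1
  exact (MeasurePreserving.symm _
    (EuclideanSpace.volume_preserving_symm_measurableEquiv_toLp (Fin n))).measure_preimage
    hS.nullMeasurableSet

lemma lintA {a : ℝ} (ha : -1 < a) {T : ℝ} (hT : 0 < T) :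
    ∫⁻ t in Ioo (0:ℝ) T, ENNReal.ofReal (|t| ^ a) = ENNReal.ofReal (T ^ (a+1) / (a+1)) := by
  have hcong : ∫⁻ t in Ioo (0:ℝ) T, ENNReal.ofReal (|t| ^ a)
      = ∫⁻ t in Ioo (0:ℝ) T, ENNReal.ofReal (t ^ a) := by
    refine setLIntegral_congr_fun measurableSet_Ioo ?_
    intro t ht
    dsimp only
    rw [abs_of_pos ht.1]
  rw [hcong]
  have hint : IntegrableOn (fun t : ℝ => t ^ a) (Ioo 0 T) volume := by
    have := (intervalIntegral.intervalIntegrable_rpow' (r := a) (a := 0) (b := T) ha)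
    rw [intervalIntegrable_iff] at this
    exact this.mono_set (by rw [uIoc_of_le hT.le]; exact Ioo_subset_Ioc_self)
  rw [← ofReal_integral_eq_lintegral_ofReal hint]
  · congr 1
    rw [← integral_Ioc_eq_integral_Ioo, ← intervalIntegral.integral_of_le hT.le,
      integral_rpow (Or.inl ha)]
    rw [Real.zero_rpow (by linarith)]
    ring_nf
  · filter_upwards [ae_restrict_mem measurableSet_Ioo] with t ht
    exact Real.rpow_nonneg ht.1.le _

lemma lintSym {a : ℝ} (ha : -1 < a) {T : ℝ} (hT : 0 < T) :
    ∫⁻ t in Ioo (-T) T, ENNReal.ofReal (|t| ^ a)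
      ≤ 2 * ENNReal.ofReal (T ^ (a+1) / (a+1)) := by
  have hsub : Ioo (-T) T ⊆ Ioc (-T) 0 ∪ Ioo 0 T := by
    intro t ht
    rcases le_or_gt t 0 with h | h
    · exact Or.inl ⟨ht.1, h⟩
    · exact Or.inr ⟨h, ht.2⟩
  calc ∫⁻ t in Ioo (-T) T, ENNReal.ofReal (|t| ^ a)
      ≤ ∫⁻ t in Ioc (-T) 0 ∪ Ioo 0 T, ENNReal.ofReal (|t| ^ a) :=
        lintegral_mono_set hsub
    _ ≤ (∫⁻ t in Ioc (-T) 0, ENNReal.ofReal (|t| ^ a))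
        + ∫⁻ t in Ioo 0 T, ENNReal.ofReal (|t| ^ a) := lintegral_union_le _ _ _
    _ ≤ ENNReal.ofReal (T ^ (a+1) / (a+1)) + ENNReal.ofReal (T ^ (a+1) / (a+1)) := by
        refine add_le_add ?_ (le_of_eq (lintA ha hT))
        have h := (Measure.measurePreserving_neg (volume : Measure ℝ)).setLIntegral_comp_emb
          (MeasurableEquiv.neg ℝ).measurableEmbedding
          (fun t => ENNReal.ofReal (|t| ^ a)) (Ico 0 T)
        simp only [abs_neg] at h
        rw [Set.image_neg_eq_neg, Set.neg_Ico, neg_zero] at h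
        rw [← h]
        have heq : ∫⁻ t in Ico (0:ℝ) T, ENNReal.ofReal (|t| ^ a)
            = ∫⁻ t in Ioo (0:ℝ) T, ENNReal.ofReal (|t| ^ a) :=
          setLIntegral_congr Ioo_ae_eq_Ico.symm
        rw [heq, lintA ha hT]
    _ = 2 * ENNReal.ofReal (T ^ (a+1) / (a+1)) := (two_mul _).symm

lemma dist_sq_split (n : ℕ) (z w : En (n+1)) :
    dist z w ^ 2 = dist (down n z) (down n w) ^ 2 + (z (Fin.last n) - w (Fin.last n)) ^ 2 := by
  have h1 : dist z w ^ 2 = ∑ i, dist (z i) (w i) ^ 2 := by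
    rw [EuclideanSpace.dist_eq]
    rw [Real.sq_sqrt (by positivity)]
  have h2 : dist (down n z) (down n w) ^ 2 = ∑ i : Fin n, dist (z i.castSucc) (w i.castSucc) ^ 2 := by
    rw [EuclideanSpace.dist_eq]
    rw [Real.sq_sqrt (by positivity)]
    rfl
  rw [h1, h2, Fin.sum_univ_castSucc]
  simp [Real.dist_eq, sq_abs]

lemma up_last (n : ℕ) (x : En n) (t : ℝ) : (up n x t) (Fin.last n) = t := by simp [up]

lemma down_up (n : ℕ) (x : En n) (t : ℝ) : down n (up n x t) = x := by
  ext i; simp [up, down]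

lemma measurable_down (n : ℕ) : Measurable (down n) := by
  have : Measurable fun (z : En (n+1)) (i : Fin n) => z i.castSucc :=
    by fun_prop
  exact (EuclideanSpace.measurableEquiv (Fin n)).symm.measurable.comp this

end Avg

set_option maxHeartbeats 2000000 in
open Avg in
/-- the averaging estimate in the proof of Lemma 2.2: there is
`θ ∈ (0,1)`, depending only on `n`, `p`, `a`, such that for every bounded
measurable `V` on `B = B(z0, 3r)` vanishing `μ_a`-a.e. on
`{(x,t) ∈ B : |x - x0| ≥ 2r + |t|}`, the average of `V` over `B` is at most
`θ` times the `L^p(μ_a)`-average of `|V|`. -/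
theorem average_le_theta_mul_Lp_average
    (n : ℕ) (hn : 2 ≤ n) (p a : ℝ) (hp : 1 < p) (ha1 : -1 < a) (ha2 : a < p - 1) :
    ∃ θ : ℝ, 0 < θ ∧ θ < 1 ∧
      ∀ (x0 : En n) (r : ℝ), 0 < r →
        ∀ V : En (n + 1) → ℝ, Measurable V → (∃ M : ℝ, ∀ z, |V z| ≤ M) →
          (∀ᵐ z ∂(muW n a), z ∈ ball (up n x0 0) (3 * r) →
              2 * r + |z (Fin.last n)| ≤ dist (down n z) x0 → V z = 0) →
          |(muW n a (ball (up n x0 0) (3 * r))).toReal⁻¹ *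
              ∫ z in ball (up n x0 0) (3 * r), V z ∂(muW n a)| ≤
            θ * ((muW n a (ball (up n x0 0) (3 * r))).toReal⁻¹ *
              ∫ z in ball (up n x0 0) (3 * r), |V z| ^ p ∂(muW n a)) ^ (1 / p) := by
  haveI : NeZero n := ⟨by omega⟩
  have hp0 : 0 < p := lt_trans one_pos hp
  have ha1' : 0 < a + 1 := by linarith
  set q : ℝ := p.conjExponent with hqdef
  have hpq : p.HolderConjugate q := Real.HolderConjugate.conjExponent hp
  have hq0 : 0 < q := hpq.symm.pos
  have hn0 : n ≠ 0 := by omega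
  set c0 : ℝ := (1/15 : ℝ) ^ (a+1) * ((12/5:ℝ)^n - (11/5:ℝ)^n) / (2 * 3^n) with hc0def
  have hpow : (11/5:ℝ)^n < (12/5:ℝ)^n := by
    exact pow_lt_pow_left₀ (by norm_num) (by norm_num) hn0
  have hc0pos : 0 < c0 :=
    div_pos (mul_pos (Real.rpow_pos_of_pos (by norm_num) _) (by linarith)) (by positivity)
  have hc0lt : c0 < 1 := by
    have h1 : (1/15:ℝ) ^ (a+1) ≤ 1 :=
      Real.rpow_le_one (by norm_num) (by norm_num) (by linarith)
    have h2 : (12/5:ℝ)^n ≤ 3^n := pow_le_pow_left₀ (by norm_num) (by norm_num) n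
    have h3 : (0:ℝ) < 3^n := by positivity
    have h4 : (0:ℝ) < (11/5:ℝ)^n := by positivity
    rw [hc0def, div_lt_one (by positivity)]
    nlinarith [Real.rpow_pos_of_pos (show (0:ℝ) < 1/15 by norm_num) (a+1)]
  set θ : ℝ := (1 - c0) ^ (1/q) with hθdef
  refine ⟨θ, Real.rpow_pos_of_pos (by linarith) _,
    Real.rpow_lt_one (by linarith) (by linarith) (by positivity), ?_⟩
  intro x0 r hr V hV hbd hsupp
  set μ := muW n a with hμdef
  set B := ball (up n x0 0) (3*r) with hBdef
  set Bad : Set (En (n+1)) :=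
    B ∩ {z | dist (down n z) x0 < 2*r + |z (Fin.last n)|} with hBaddef
  set Good : Set (En (n+1)) :=
    cylSet n (Ioo 0 (r/5)) (ball x0 (12/5*r) \ ball x0 (11/5*r)) with hGooddef
  set Cyl : Set (En (n+1)) := cylSet n (Ioo (-(3*r)) (3*r)) (ball x0 (3*r)) with hCyldef
  have hBmeas : MeasurableSet B := measurableSet_ball
  have hBadmeas : MeasurableSet Bad :=
    hBmeas.inter (measurableSet_lt ((measurable_down n).dist measurable_const)
      (measurable_const.add (by fun_prop : Measurable fun z : En (n+1) => z (Fin.last n)).abs))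
  -- set inclusions
  have hBC : B ⊆ Cyl := by
    intro z hz
    rw [hCyldef, mem_cylSet]
    have hsplit := dist_sq_split n z (up n x0 0)
    rw [down_up, up_last, sub_zero] at hsplit
    have hd : dist z (up n x0 0) < 3*r := mem_ball.mp hz
    have hd0 : 0 ≤ dist z (up n x0 0) := dist_nonneg
    have hdn0 : 0 ≤ dist (down n z) x0 := dist_nonneg
    have hsq : dist z (up n x0 0) ^ 2 < (3*r)^2 := by nlinarith
    constructor
    · constructor
      · nlinarith [sq_nonneg (z (Fin.last n) + 3*r)]
      · nlinarith [sq_nonneg (z (Fin.last n) - 3*r)]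
    · rw [mem_ball]
      nlinarith [sq_nonneg (dist (down n z) x0 - 3*r), sq_nonneg (z (Fin.last n))]
  have hGB : Good ⊆ B := by
    intro z hz
    rw [hGooddef, mem_cylSet] at hz
    obtain ⟨⟨ht0, ht1⟩, hzS⟩ := hz
    have h1 : dist (down n z) x0 < 12/5*r := mem_ball.mp hzS.1
    have h0 : 0 ≤ dist (down n z) x0 := dist_nonneg
    have hsplit := dist_sq_split n z (up n x0 0)
    rw [down_up, up_last, sub_zero] at hsplit
    rw [hBdef, mem_ball]
    nlinarith [dist_nonneg (x := z) (y := up n x0 0),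
      sq_nonneg (dist z (up n x0 0) - 3*r)]
  have hdisj : Disjoint Good Bad := by
    rw [Set.disjoint_left]
    intro z hzG hzB
    rw [hGooddef, mem_cylSet] at hzG
    obtain ⟨⟨ht0, ht1⟩, hzS⟩ := hzG
    have h2 : ¬ (down n z ∈ ball x0 (11/5*r)) := hzS.2
    rw [mem_ball, not_lt] at h2
    have h3 : dist (down n z) x0 < 2*r + |z (Fin.last n)| := hzB.2
    rw [abs_of_pos ht0] at h3
    linarith
  -- measures
  set ω := volume (ball (0:En n) 1) with hωdef
  have hωpos : 0 < ω := measure_ball_pos volume 0 one_pos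
  have hωfin : ω ≠ ⊤ := measure_ball_lt_top.ne
  have hannulus : volume (ball x0 (12/5*r) \ ball x0 (11/5*r))
      = ENNReal.ofReal ((12/5*r)^n - (11/5*r)^n) * ω := by
    rw [measure_diff (ball_subset_ball (by nlinarith)) measurableSet_ball.nullMeasurableSet
      measure_ball_lt_top.ne,
      Measure.addHaar_ball volume x0 (by positivity : (0:ℝ) ≤ 12/5*r),
      Measure.addHaar_ball volume x0 (by positivity : (0:ℝ) ≤ 11/5*r),
      finrank_euclideanSpace_fin]
    rw [← ENNReal.sub_mul (fun _ _ => hωfin), ← ENNReal.ofReal_sub _ (by positivity)]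
  set g1 : ℝ := (r/5)^(a+1)/(a+1) * ((12/5*r)^n - (11/5*r)^n) with hg1def
  set c1 : ℝ := 2 * ((3*r)^(a+1)/(a+1)) * (3*r)^n with hc1def
  have hg1pos : 0 < g1 := by
    apply mul_pos (div_pos (Real.rpow_pos_of_pos (by positivity) _) ha1')
    have : (11/5*r)^n < (12/5*r)^n := pow_lt_pow_left₀ (by nlinarith) (by positivity) hn0
    linarith
  have hGood : μ Good = ENNReal.ofReal g1 * ω := by
    rw [hμdef, hGooddef, muW_cylSet n a measurableSet_Ioo
      (measurableSet_ball.diff measurableSet_ball),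
      lintA ha1 (by positivity : (0:ℝ) < r/5), hannulus, ← mul_assoc,
      ← ENNReal.ofReal_mul (by positivity)]
  have hCylle : μ Cyl ≤ ENNReal.ofReal c1 * ω := by
    rw [hμdef, hCyldef, muW_cylSet n a measurableSet_Ioo measurableSet_ball,
      Measure.addHaar_ball volume x0 (by positivity : (0:ℝ) ≤ 3*r),
      finrank_euclideanSpace_fin]
    calc (∫⁻ t in Ioo (-(3*r)) (3*r), ENNReal.ofReal (|t| ^ a))
          * (ENNReal.ofReal ((3*r)^n) * ω)
        ≤ (2 * ENNReal.ofReal ((3*r)^(a+1)/(a+1))) * (ENNReal.ofReal ((3*r)^n) * ω) := by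
          gcongr
          exact lintSym ha1 (by positivity)
      _ = ENNReal.ofReal c1 * ω := by
          rw [hc1def, ← mul_assoc]
          congr 1
          rw [show (2:ℝ≥0∞) = ENNReal.ofReal 2 by simp,
            ← ENNReal.ofReal_mul (by norm_num), ← ENNReal.ofReal_mul (by positivity)]
  have hkey : g1 = c0 * c1 := by
    have hA : (r/5:ℝ)^(a+1) = (1/15:ℝ)^(a+1) * (3*r)^(a+1) := by
      rw [← Real.mul_rpow (by norm_num) (by positivity)]
      norm_num
      ring_nf
    have hB1 : ((12/5*r):ℝ)^n = (12/5:ℝ)^n * r^n := by rw [mul_pow]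
    have hB2 : ((11/5*r):ℝ)^n = (11/5:ℝ)^n * r^n := by rw [mul_pow]
    have hB3 : ((3*r):ℝ)^n = (3:ℝ)^n * r^n := by rw [mul_pow]
    rw [hg1def, hc1def, hc0def, hA, hB1, hB2, hB3]
    have h3n : (3:ℝ)^n ≠ 0 := by positivity
    field_simp
  have hμB_le : μ B ≤ ENNReal.ofReal c1 * ω := le_trans (measure_mono hBC) hCylle
  have hμB_fin : μ B ≠ ⊤ :=
    ne_top_of_le_ne_top (ENNReal.mul_ne_top ENNReal.ofReal_ne_top hωfin) hμB_le
  have hμB_pos : 0 < μ B := by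
    refine lt_of_lt_of_le ?_ (measure_mono hGB)
    rw [hGood]
    exact ENNReal.mul_pos (ENNReal.ofReal_pos.mpr hg1pos).ne' hωpos.ne'
  have hBadB : Bad ⊆ B := inter_subset_left
  have hBadfin : μ Bad ≠ ⊤ := ne_top_of_le_ne_top hμB_fin (measure_mono hBadB)
  have hGoodBad : μ Good + μ Bad ≤ μ B := by
    rw [← measure_union hdisj hBadmeas]
    exact measure_mono (union_subset hGB hBadB)
  have hc0B_le : ENNReal.ofReal c0 * μ B ≤ μ Good := by
    calc ENNReal.ofReal c0 * μ B ≤ ENNReal.ofReal c0 * (ENNReal.ofReal c1 * ω) := by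
          gcongr
      _ = ENNReal.ofReal (c0 * c1) * ω := by
          rw [← mul_assoc, ← ENNReal.ofReal_mul hc0pos.le]
      _ = μ Good := by rw [hGood, hkey]
  have hBadReal : (μ Bad).toReal ≤ (1 - c0) * (μ B).toReal := by
    have h2 : ENNReal.ofReal c0 * μ B + μ Bad ≤ μ B :=
      le_trans (add_le_add_left hc0B_le _) hGoodBad
    have h3 := ENNReal.toReal_mono hμB_fin h2
    rw [ENNReal.toReal_add (ENNReal.mul_ne_top ENNReal.ofReal_ne_top hμB_fin) hBadfin,
      ENNReal.toReal_mul, ENNReal.toReal_ofReal hc0pos.le] at h3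
    linarith
  -- Hölder
  set J : ℝ≥0∞ := ∫⁻ z in B, ENNReal.ofReal (|V z| ^ p) ∂μ with hJdef
  obtain ⟨M, hM⟩ := hbd
  have hM0 : 0 ≤ M := le_trans (abs_nonneg _) (hM (up n x0 0))
  have hVm : Measurable fun z => ENNReal.ofReal (|V z| ^ p) := by fun_prop
  have hJfin : J ≠ ⊤ := by
    have hle : J ≤ ENNReal.ofReal (M ^ p) * μ B := by
      rw [hJdef]
      calc ∫⁻ z in B, ENNReal.ofReal (|V z| ^ p) ∂μ
          ≤ ∫⁻ _ in B, ENNReal.ofReal (M ^ p) ∂μ := by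
            refine lintegral_mono fun z => ENNReal.ofReal_le_ofReal ?_
            exact Real.rpow_le_rpow (abs_nonneg _) (hM z) hp0.le
        _ = ENNReal.ofReal (M ^ p) * μ B := setLIntegral_const _ _
    exact ne_top_of_le_ne_top (ENNReal.mul_ne_top ENNReal.ofReal_ne_top hμB_fin) hle
  have hsupp' : ∀ᵐ z ∂(μ.restrict B),
      ENNReal.ofReal (|V z|) = ENNReal.ofReal (|V z|) * Bad.indicator 1 z := by
    filter_upwards [ae_restrict_mem hBmeas, ae_restrict_of_ae hsupp] with z hzB hz
    by_cases hzBad : z ∈ Bad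
    · rw [Set.indicator_of_mem hzBad, Pi.one_apply, mul_one]
    · have hge : 2*r + |z (Fin.last n)| ≤ dist (down n z) x0 := by
        by_contra hc
        exact hzBad ⟨hzB, lt_of_not_ge hc⟩
      rw [hz hzB hge, Set.indicator_of_notMem hzBad]
      simp
  have hI_le : (∫⁻ z in B, ENNReal.ofReal (|V z|) ∂μ) ≤ J ^ (1/p) * (μ Bad) ^ (1/q) := by
    rw [lintegral_congr_ae hsupp']
    refine le_trans (ENNReal.lintegral_mul_le_Lp_mul_Lq (μ.restrict B) hpq
      (hV.abs.ennreal_ofReal.aemeasurable)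
      ((measurable_one.indicator hBadmeas).aemeasurable)) (le_of_eq ?_)
    congr 1
    · congr 1
      refine lintegral_congr fun z => ?_
      rw [← ENNReal.ofReal_rpow_of_nonneg (abs_nonneg _) hp0.le]
    · congr 1
      have hgq : (fun z => (Bad.indicator (1 : En (n+1) → ℝ≥0∞) z) ^ q)
          = fun z => Bad.indicator 1 z := by
        funext z
        by_cases hzb : z ∈ Bad <;>
          simp [hzb, ENNReal.zero_rpow_of_pos hq0]
      rw [hgq, lintegral_indicator_one hBadmeas, Measure.restrict_apply hBadmeas,
        inter_eq_self_of_subset_left hBadB]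
  -- integral identities
  have habs : |∫ z in B, V z ∂μ| ≤ ∫ z in B, |V z| ∂μ := by
    simpa [Real.norm_eq_abs] using
      norm_integral_le_integral_norm (μ := μ.restrict B) (f := V)
  have hintabs : ∫ z in B, |V z| ∂μ = (∫⁻ z in B, ENNReal.ofReal (|V z|) ∂μ).toReal := by
    rw [integral_eq_lintegral_of_nonneg_ae (Filter.Eventually.of_forall fun z => abs_nonneg _)
      hV.abs.aestronglyMeasurable]
  have hintp : ∫ z in B, |V z| ^ p ∂μ = J.toReal := by
    rw [hJdef, integral_eq_lintegral_of_nonneg_ae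
      (Filter.Eventually.of_forall fun z => Real.rpow_nonneg (abs_nonneg _) _)
      (by fun_prop : Measurable fun z => |V z| ^ p).aestronglyMeasurable]
  have hmBpos : 0 < (μ B).toReal := ENNReal.toReal_pos hμB_pos.ne' hμB_fin
  have hIle2 : (∫⁻ z in B, ENNReal.ofReal (|V z|) ∂μ).toReal
      ≤ J.toReal ^ (1/p) * (μ Bad).toReal ^ (1/q) := by
    have hfin : J ^ (1/p) * (μ Bad) ^ (1/q) ≠ ⊤ :=
      ENNReal.mul_ne_top (ENNReal.rpow_ne_top_of_nonneg (by positivity) hJfin)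
        (ENNReal.rpow_ne_top_of_nonneg (by positivity) hBadfin)
    have h := ENNReal.toReal_mono hfin hI_le
    rwa [ENNReal.toReal_mul, ← ENNReal.toReal_rpow, ← ENNReal.toReal_rpow] at h
  -- final algebra
  rw [hintp, abs_mul, abs_of_nonneg (inv_nonneg.mpr ENNReal.toReal_nonneg)]
  set mB := (μ B).toReal with hmBdef
  set Jr := J.toReal with hJrdef
  set βr := (μ Bad).toReal with hβrdef
  have hJr0 : 0 ≤ Jr := ENNReal.toReal_nonneg
  have hβr0 : 0 ≤ βr := ENNReal.toReal_nonneg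
  have hstep : βr ^ (1/q) ≤ θ * mB ^ (1/q) := by
    have h1 : βr ^ (1/q) ≤ ((1-c0) * mB) ^ (1/q) :=
      Real.rpow_le_rpow hβr0 hBadReal (by positivity)
    rwa [Real.mul_rpow (by linarith) hmBpos.le] at h1
  have hmain : mB⁻¹ * βr ^ (1/q) ≤ θ * mB⁻¹ ^ (1/p) := by
    have hexp : (-1 : ℝ) + 1/q = -(1/p) := by
      have h := hpq.inv_add_inv_eq_one
      rw [one_div, one_div]
      linarith
    have h2 : mB⁻¹ * mB ^ (1/q) = mB⁻¹ ^ (1/p) := by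
      rw [← Real.rpow_neg_one mB, ← Real.rpow_add hmBpos, hexp,
        Real.rpow_neg hmBpos.le, ← Real.inv_rpow hmBpos.le, Real.rpow_neg_one]
    calc mB⁻¹ * βr ^ (1/q) ≤ mB⁻¹ * (θ * mB ^ (1/q)) := by
          exact mul_le_mul_of_nonneg_left hstep (inv_nonneg.mpr hmBpos.le)
      _ = θ * (mB⁻¹ * mB ^ (1/q)) := by ring
      _ = θ * mB⁻¹ ^ (1/p) := by rw [h2]
  calc mB⁻¹ * |∫ z in B, V z ∂μ|
      ≤ mB⁻¹ * (Jr ^ (1/p) * βr ^ (1/q)) := by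
        refine mul_le_mul_of_nonneg_left ?_ (inv_nonneg.mpr hmBpos.le)
        exact le_trans habs (le_trans (le_of_eq hintabs) hIle2)
    _ = (mB⁻¹ * βr ^ (1/q)) * Jr ^ (1/p) := by ring
    _ ≤ (θ * mB⁻¹ ^ (1/p)) * Jr ^ (1/p) := by
        exact mul_le_mul_of_nonneg_right hmain (Real.rpow_nonneg hJr0 _)
    _ = θ * (mB⁻¹ ^ (1/p) * Jr ^ (1/p)) := by ring
    _ = θ * (mB⁻¹ * Jr) ^ (1/p) := by
        rw [← Real.mul_rpow (inv_nonneg.mpr hmBpos.le) hJr0]
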